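/- arXiv:math/0301153 — 3 statements merged into one kernel-verified Lean document; each statement's English description precedes it below -/
import Mathlib

section
/- Let k, l be positive integers and set φ(1) = l + 2k, φ(2) = l + k, φ(3) = l. For j ∈ ℕ define a₁ = (j − φ(1) + 1)₊, a₆ = (j − 2φ(2) + 1)₊, a₇ = (j − 3φ(3) + 1)₊ (where (a)₊ = max{a,0}). Then j − a₁ − a₆ − a₇ < 0 if and only if j ≥ 2φ(2) + φ(3) − 1. -/
/-!
Put `d₁ = φ(1)`, `d₂ = 2φ(2)`, `d₃ = 3φ(3)`, so that `aᵢ = (j + 1 - dᵢ)₊`. Since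
`-(x)₊ = min (-x) 0`, the number `j - a₁ - a₆ - a₇` is the minimum of the eight affine functions
`j - ∑_{i ∈ S} (j + 1 - dᵢ)`, `S ⊆ {1, 2, 3}`. When the `dᵢ` are positive and satisfy the triangle
inequalities, a negative value for some `S` forces one for `S = {1, 2, 3}`, and then all three `aᵢ`
are active. So the sign changes exactly where `2(j + 1) ≥ d₁ + d₂ + d₃`, whatever the order
of the `dᵢ`.
-/

theorem sub_max_three_neg_iff_of_triangle {j d₁ d₂ d₃ : ℤ} (hj : 0 ≤ j)
    (hd₁ : 0 < d₁) (hd₂ : 0 < d₂) (hd₃ : 0 < d₃)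
    (h₁ : d₁ ≤ d₂ + d₃) (h₂ : d₂ ≤ d₁ + d₃) (h₃ : d₃ ≤ d₁ + d₂) :
    j - max (j - d₁ + 1) 0 - max (j - d₂ + 1) 0 - max (j - d₃ + 1) 0 < 0 ↔
      d₁ + d₂ + d₃ ≤ 2 * (j + 1) := by
  constructor
  · intro hneg
    by_contra! hsum
    -- the triangle inequalities turn `2 (j + 1) < ∑ dᵢ` into a bound on every pair
    have h₁₂ : j + 2 ≤ d₁ + d₂ := by omega
    have h₁₃ : j + 2 ≤ d₁ + d₃ := by omega
    have h₂₃ : j + 2 ≤ d₂ + d₃ := by omega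
    omega
  · intro hsum
    rw [max_eq_left (by omega), max_eq_left (by omega), max_eq_left (by omega)]
    omega

theorem Dj_meets_C167_negatively_iff
    (k l : ℤ) (hk : 0 < k) (hl : 0 < l) (j : ℤ) (hj : 0 ≤ j)
    (φ1 φ2 φ3 a1 a6 a7 : ℤ)
    (hφ1 : φ1 = l + 2 * k) (hφ2 : φ2 = l + k) (hφ3 : φ3 = l)
    (ha1 : a1 = max (j - φ1 + 1) 0)
    (ha6 : a6 = max (j - 2 * φ2 + 1) 0)
    (ha7 : a7 = max (j - 3 * φ3 + 1) 0) :
    j - a1 - a6 - a7 < 0 ↔ 2 * φ2 + φ3 - 1 ≤ j := by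
  subst hφ1 hφ2 hφ3 ha1 ha6 ha7
  rw [sub_max_three_neg_iff_of_triangle hj (by omega) (by omega) (by omega)
    (by omega) (by omega) (by omega)]
  omega
end

section
/- Let k, l be positive integers, φ(1) = l + 2k, φ(2) = l + k, φ(3) = l, and let 0 ≤ j < 3l + 3k − 2. Define a₁ = (j−φ(1)+1)₊, a₄ = (j−2φ(2)+1)₊, a₇ = (j−3φ(3)+1)₊, t₁ = (j−φ(1)−φ(2)+2)₊, t₂ = (j−2φ(2)−φ(3)+2)₊, where (a)₊ = max{a,0}. Then the following five quantities are all nonnegative: (i) j − t₁ − t₂ − 2a₄, (ii) a₁ − 2t₁ − t₂, (iii) a₄ − t₁ − t₂, (iv) a₇ − 3t₂, (v) j − 3t₁ − 3t₂. -/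
/-!
Each of the five quantities is a combination of positive parts of affine functions of `j`, and a
sum of positive parts `x⁺ + y⁺` is bounded by `z ≥ 0` as soon as `x`, `y` and `x + y` are. This
yields `t₁ + t₂ ≤ a₄`, `t₁ + a₄ ≤ a₁`, `3 a₄ ≤ j` and `3 t₂ ≤ a₇`, each a linear inequality in
`j, k, l` valid on `0 ≤ j ≤ 3l + 3k - 3`, and the five claims are linear consequences of these.
-/

theorem max_zero_add_max_zero_le {α : Type*} [AddCommGroup α] [LinearOrder α]
    [IsOrderedAddMonoid α] {x y z : α} (hx : x ≤ z) (hy : y ≤ z) (hxy : x + y ≤ z) (hz : 0 ≤ z) :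
    max x 0 + max y 0 ≤ z := by
  rcases le_total x 0 with hx0 | hx0 <;> rcases le_total y 0 with hy0 | hy0 <;>
    simp only [max_eq_left, max_eq_right, hx0, hy0, add_zero, zero_add] <;> assumption

theorem mul_max_zero_le {α : Type*} [Semiring α] [LinearOrder α] [IsOrderedRing α]
    {n x z : α} (hn : 0 ≤ n) (hnx : n * x ≤ z) (hz : 0 ≤ z) : n * max x 0 ≤ z := by
  rw [mul_max_of_nonneg _ _ hn, mul_zero]
  exact max_le hnx hz

theorem reduced_divisor_is_nef
    (k l : ℤ) (hk : 0 < k) (hl : 0 < l) (j : ℤ)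
    (hj0 : 0 ≤ j) (hj : j < 3 * l + 3 * k - 2)
    (φ1 φ2 φ3 a1 a4 a7 t1 t2 : ℤ)
    (hφ1 : φ1 = l + 2 * k) (hφ2 : φ2 = l + k) (hφ3 : φ3 = l)
    (ha1 : a1 = max (j - φ1 + 1) 0)
    (ha4 : a4 = max (j - 2 * φ2 + 1) 0)
    (ha7 : a7 = max (j - 3 * φ3 + 1) 0)
    (ht1 : t1 = max (j - φ1 - φ2 + 2) 0)
    (ht2 : t2 = max (j - 2 * φ2 - φ3 + 2) 0) :
    0 ≤ j - t1 - t2 - 2 * a4 ∧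
    0 ≤ a1 - 2 * t1 - t2 ∧
    0 ≤ a4 - t1 - t2 ∧
    0 ≤ a7 - 3 * t2 ∧
    0 ≤ j - 3 * t1 - 3 * t2 := by
  subst φ1 φ2 φ3
  have ha1_ge : j - (l + 2 * k) + 1 ≤ a1 := ha1 ▸ le_max_left _ _
  have ha4_ge : j - 2 * (l + k) + 1 ≤ a4 := ha4 ▸ le_max_left _ _
  have ha7_ge : j - 3 * l + 1 ≤ a7 := ha7 ▸ le_max_left _ _
  have ha1_nonneg : 0 ≤ a1 := ha1 ▸ le_max_right _ _
  have ha4_nonneg : 0 ≤ a4 := ha4 ▸ le_max_right _ _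
  have ha7_nonneg : 0 ≤ a7 := ha7 ▸ le_max_right _ _
  have ht1_add_t2 : t1 + t2 ≤ a4 := by
    rw [ht1, ht2]
    exact max_zero_add_max_zero_le (by linarith) (by linarith) (by linarith) ha4_nonneg
  have ht1_add_a4 : t1 + a4 ≤ a1 := by
    rw [ht1, ha4]
    exact max_zero_add_max_zero_le (by linarith) (by linarith) (by linarith) ha1_nonneg
  have h3a4 : 3 * a4 ≤ j := ha4 ▸ mul_max_zero_le (by norm_num) (by linarith) hj0
  have h3t2 : 3 * t2 ≤ a7 := ht2 ▸ mul_max_zero_le (by norm_num) (by linarith) ha7_nonneg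
  refine ⟨?_, ?_, ?_, ?_, ?_⟩ <;> linarith
end

section
/- Let k, l be positive integers, φ(1) = l+2k, φ(2) = l+k, φ(3) = l, and define h : ℕ → ℤ by h(j) = C(j+2,2) − 3·C(j+2−φ(1),2) − 3·C(j+2−2φ(2),2) − C(j+2−3φ(3),2) + 6·C(j+2−φ(1)−φ(2),2) + 6·C(j+2−2φ(2)−φ(3),2) − 6·C(j+2−φ(1)−φ(2)−φ(3),2), where C(n,2) = n(n−1)/2 for n ≥ 0 and C(n,2) = 0 for n < 0. Then: (a) h(j) ≥ 0 for all j, and (b) h(j) = 0 for all j ≥ φ(1)+φ(2)+φ(3)−2, so that ∑_{j≥0} h(j) t^j = (1 − 3t^{φ(1)} − 3t^{2φ(2)} − t^{3φ(3)} + 6t^{φ(1)+φ(2)} + 6t^{2φ(2)+φ(3)} − 6t^{φ(1)+φ(2)+φ(3)})/(1−t)³ as formal power series. -/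
/-- C(n,2) = n(n−1)/2 for n ≥ 0 and 0 for n < 0. -/
def C2 (n : ℤ) : ℤ := if 0 ≤ n then n * (n - 1) / 2 else 0

/-!
Put `u = t^k` and `v = t^l`, so that `t^φ1 = u²v`, `t^(2φ2) = u²v²`, `t^(3φ3) = v³`. The numerator
of the series then factors as
  `(1 - v) ((1 - v)² + 3v (1 - u) ((1 - u²v) + u (1 - uv)))`,
and each factor `1 - t^n` is `(1 - t) [n]` with `[n] = 1 + t + ⋯ + t^(n-1)`. Dividing by `(1 - t)³`
shows that `h` is the coefficient sequence of the polynomial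
  `[l] ([l]² + 3 t^l [k] ([l + 2k] + t^k [l + k]))`,
which has nonnegative coefficients and degree `3l + 3k - 3`.
-/

section LinearHilbertPoly

open Finset

variable {R : Type*}

def linearHilbertPoly [CommSemiring R] (x : R) (k l : ℕ) : R :=
  (∑ i ∈ range l, x ^ i) * ((∑ i ∈ range l, x ^ i) ^ 2 +
    3 * x ^ l * (∑ i ∈ range k, x ^ i) *
      ((∑ i ∈ range (l + 2 * k), x ^ i) + x ^ k * ∑ i ∈ range (l + k), x ^ i))

lemma map_linearHilbertPoly {S : Type*} [CommSemiring R] [CommSemiring S] (f : R →+* S)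
    (x : R) (k l : ℕ) : f (linearHilbertPoly x k l) = linearHilbertPoly (f x) k l := by
  simp [linearHilbertPoly, map_sum, map_ofNat]

lemma one_sub_pow_three_mul_linearHilbertPoly [CommRing R] (x : R) (k l : ℕ) :
    (1 - x) ^ 3 * linearHilbertPoly x k l =
      1 - 3 * x ^ (l + 2 * k) - 3 * x ^ (2 * (l + k)) - x ^ (3 * l)
        + 6 * x ^ (l + 2 * k + (l + k)) + 6 * x ^ (2 * (l + k) + l)
        - 6 * x ^ (l + 2 * k + (l + k) + l) := by
  have hg (n : ℕ) : (1 - x) * ∑ i ∈ range n, x ^ i = 1 - x ^ n := mul_neg_geom_sum x n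
  calc (1 - x) ^ 3 * linearHilbertPoly x k l
      = ((1 - x) * ∑ i ∈ range l, x ^ i) * (((1 - x) * ∑ i ∈ range l, x ^ i) ^ 2 +
          3 * x ^ l * ((1 - x) * ∑ i ∈ range k, x ^ i) *
            ((1 - x) * (∑ i ∈ range (l + 2 * k), x ^ i) +
              x ^ k * ((1 - x) * ∑ i ∈ range (l + k), x ^ i))) := by
        unfold linearHilbertPoly; ring
    _ = _ := by simp only [hg]; ring

open Polynomial

lemma natDegree_geom_sum_X_le [Semiring R] (n : ℕ) :
    (∑ i ∈ range n, (X : R[X]) ^ i).natDegree ≤ n - 1 :=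
  natDegree_sum_le_of_forall_le _ _ fun i hi =>
    (natDegree_X_pow_le i).trans (by rw [mem_range] at hi; omega)

lemma natDegree_linearHilbertPoly_le {k l : ℕ} (hk : 0 < k) (hl : 0 < l) :
    (linearHilbertPoly (X : ℕ[X]) k l).natDegree ≤ 3 * l + 3 * k - 3 := by
  have hsum : natDegree ((∑ i ∈ range (l + 2 * k), (X : ℕ[X]) ^ i) +
      X ^ k * ∑ i ∈ range (l + k), X ^ i) ≤ l + 2 * k - 1 :=
    natDegree_add_le_of_degree_le (natDegree_geom_sum_X_le _)
      ((natDegree_mul_le_of_le (natDegree_X_pow_le k) (natDegree_geom_sum_X_le _)).trans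
        (by omega))
  have hterm : natDegree (3 * X ^ l * (∑ i ∈ range k, (X : ℕ[X]) ^ i) *
      ((∑ i ∈ range (l + 2 * k), X ^ i) + X ^ k * ∑ i ∈ range (l + k), X ^ i))
        ≤ 0 + l + (k - 1) + (l + 2 * k - 1) :=
    natDegree_mul_le_of_le (natDegree_mul_le_of_le (natDegree_mul_le_of_le
      (natDegree_ofNat 3).le (natDegree_X_pow_le l)) (natDegree_geom_sum_X_le k)) hsum
  have hsq : natDegree ((∑ i ∈ range l, (X : ℕ[X]) ^ i) ^ 2) ≤ 2 * (l - 1) :=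
    natDegree_pow_le_of_le 2 (natDegree_geom_sum_X_le l)
  refine (natDegree_mul_le_of_le (natDegree_geom_sum_X_le l)
    (natDegree_add_le_of_degree_le (hsq.trans ?_) hterm)).trans ?_ <;> omega

end LinearHilbertPoly

lemma C2_natCast_add_two (n : ℕ) : C2 ((n : ℤ) + 2) = ((2 + n).choose 2 : ℕ) := by
  rw [C2, if_pos (by positivity), Nat.choose_two_right, show 2 + n - 1 = n + 1 by omega]
  push_cast [Int.natCast_div]
  ring_nf

lemma C2_eq_zero_of_le_one {x : ℤ} (hx : x ≤ 1) : C2 x = 0 := by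
  unfold C2
  split_ifs
  · obtain rfl | rfl : x = 0 ∨ x = 1 := by omega
    all_goals rfl
  · rfl

open PowerSeries

theorem PowerSeries.coeff_ofNat_mul {R : Type*} [Semiring R] (n m : ℕ) [m.AtLeastTwo]
    (f : R⟦X⟧) : coeff n ((ofNat(m) : R⟦X⟧) * f) = ofNat(m) * coeff n f := by
  rw [← map_ofNat C m, coeff_C_mul]

noncomputable def C2Series (a : ℕ) : ℤ⟦X⟧ := mk fun j : ℕ => C2 ((j : ℤ) + 2 - a)

@[simp]
lemma coeff_C2Series (a j : ℕ) : coeff j (C2Series a) = C2 ((j : ℤ) + 2 - a) := coeff_mk _ _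

lemma C2Series_eq_X_pow_mul (a : ℕ) :
    C2Series a = X ^ a * mk fun n : ℕ => ((2 + n).choose 2 : ℤ) := by
  ext j
  rw [coeff_C2Series, coeff_X_pow_mul']
  split_ifs with hja
  · rw [coeff_mk, ← C2_natCast_add_two, Nat.cast_sub hja]
    ring_nf
  · exact C2_eq_zero_of_le_one (by omega)

lemma C2Series_mul_one_sub_X_pow_three (a : ℕ) : C2Series a * (1 - X) ^ 3 = X ^ a := by
  rw [C2Series_eq_X_pow_mul, mul_assoc, mk_add_choose_mul_one_sub_pow_eq_one, mul_one]

lemma one_sub_X_pow_three_ne_zero : ((1 - X) ^ 3 : ℤ⟦X⟧) ≠ 0 :=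
  pow_ne_zero 3 fun h => by simpa using congrArg constantCoeff h

lemma coe_map_linearHilbertPoly (k l : ℕ) :
    (((linearHilbertPoly Polynomial.X k l).map (Nat.castRingHom ℤ) : Polynomial ℤ) : ℤ⟦X⟧) =
      linearHilbertPoly X k l := by
  have hX : (Polynomial.coeToPowerSeries.ringHom.comp
      (Polynomial.mapRingHom (Nat.castRingHom ℤ))) Polynomial.X = (X : ℤ⟦X⟧) := by simp
  rw [← hX, ← map_linearHilbertPoly]
  rfl

theorem linear_hilbert_series
    (k l : ℕ) (hk : 0 < k) (hl : 0 < l)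
    (φ1 φ2 φ3 : ℕ)
    (hφ1 : φ1 = l + 2 * k) (hφ2 : φ2 = l + k) (hφ3 : φ3 = l)
    (h : ℕ → ℤ)
    (hh : ∀ j : ℕ, h j =
      C2 ((j : ℤ) + 2) - 3 * C2 ((j : ℤ) + 2 - φ1) - 3 * C2 ((j : ℤ) + 2 - 2 * φ2)
        - C2 ((j : ℤ) + 2 - 3 * φ3)
        + 6 * C2 ((j : ℤ) + 2 - φ1 - φ2) + 6 * C2 ((j : ℤ) + 2 - 2 * φ2 - φ3)
        - 6 * C2 ((j : ℤ) + 2 - φ1 - φ2 - φ3)) :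
    (∀ j : ℕ, 0 ≤ h j) ∧
    (∀ j : ℕ, φ1 + φ2 + φ3 - 2 ≤ j → h j = 0) ∧
    (PowerSeries.mk (fun j => h j)) * (1 - (X : PowerSeries ℤ)) ^ 3 =
      1 - 3 * X ^ φ1 - 3 * X ^ (2 * φ2) - X ^ (3 * φ3)
        + 6 * X ^ (φ1 + φ2) + 6 * X ^ (2 * φ2 + φ3)
        - 6 * X ^ (φ1 + φ2 + φ3) := by
  have hmk : mk (fun j => h j) = C2Series 0 - 3 * C2Series φ1 - 3 * C2Series (2 * φ2)
      - C2Series (3 * φ3) + 6 * C2Series (φ1 + φ2) + 6 * C2Series (2 * φ2 + φ3)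
      - 6 * C2Series (φ1 + φ2 + φ3) := by
    ext j
    simp [hh, coeff_ofNat_mul, sub_sub]
  have hseries : mk (fun j => h j) * (1 - X) ^ 3 = 1 - 3 * X ^ φ1 - 3 * X ^ (2 * φ2)
      - X ^ (3 * φ3) + 6 * X ^ (φ1 + φ2) + 6 * X ^ (2 * φ2 + φ3)
      - 6 * X ^ (φ1 + φ2 + φ3) := by
    simp only [hmk, sub_mul, add_mul, mul_assoc, C2Series_mul_one_sub_X_pow_three, pow_zero]
  subst φ1 φ2 φ3
  have hP : mk (fun j => h j) =
      (((linearHilbertPoly Polynomial.X k l).map (Nat.castRingHom ℤ) : Polynomial ℤ) : ℤ⟦X⟧) := by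
    refine mul_right_cancel₀ one_sub_X_pow_three_ne_zero ?_
    rw [hseries, coe_map_linearHilbertPoly, ← one_sub_pow_three_mul_linearHilbertPoly, mul_comm]
  have hcoeff (j : ℕ) :
      h j = ((linearHilbertPoly (Polynomial.X : Polynomial ℕ) k l).coeff j : ℤ) := by
    simpa using congrArg (coeff j) hP
  refine ⟨fun j => hcoeff j ▸ Int.natCast_nonneg _, fun j hj => ?_, hseries⟩
  rw [hcoeff, Polynomial.coeff_eq_zero_of_natDegree_lt, Nat.cast_zero]
  have := natDegree_linearHilbertPoly_le hk hl
  omega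
end
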